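/- The conventional variational derivatives of the Darboux Lagrangian 𝓛_{pqr} reproduce the Darboux system: treating 𝓛_{pqr} as a first-order Lagrangian density in the six fields B_{pq},B_{qp},B_{qr},B_{rq},B_{pr},B_{rp} of (ξ_p,ξ_q,ξ_r), the Euler–Lagrange expression δ𝓛_{pqr}/δB_{pq} = ∂𝓛/∂B_{pq} − Σ_a ∂_a(∂𝓛/∂(∂_a B_{pq})) equals −∂_r B_{qp} + B_{qr}B_{rp}, and δ𝓛_{pqr}/δB_{qp} equals ∂_r B_{pq} − B_{pr}B_{rq} up to sign; hence the standard Euler–Lagrange equations of 𝓛_{pqr} are exactly the six Darboux equations ∂_c B_{ab} = B_{ac}B_{cb}. -/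

import Mathlib

/-- Partial derivative in the `i`-th coordinate direction. -/
noncomputable def pd (i : Fin 3) (f : (Fin 3 → ℝ) → ℝ) (x : Fin 3 → ℝ) : ℝ :=
  fderiv ℝ f x (Pi.single i 1)

/-- The Darboux Lagrangian density `𝓛_{pqr}` as a function of the jet variables:
`u (a,b)` stands for the field value `B_{ab}` and `w (c,(a,b))` for `∂_c B_{ab}`. -/
noncomputable def Ldens (p q r : Fin 3)
    (u : Fin 3 × Fin 3 → ℝ) (w : Fin 3 × (Fin 3 × Fin 3) → ℝ) : ℝ :=
  (1/2) * (u (r, q) * w (p, (q, r)) - u (q, r) * w (p, (r, q)))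
  + (1/2) * (u (q, p) * w (r, (p, q)) - u (p, q) * w (r, (q, p)))
  + (1/2) * (u (p, r) * w (q, (r, p)) - u (r, p) * w (q, (p, r)))
  + u (r, p) * u (p, q) * u (q, r) - u (r, q) * u (q, p) * u (p, r)

/-- The zero-jet of the fields `B` at the point `x`. -/
noncomputable def jetu (B : Fin 3 → Fin 3 → (Fin 3 → ℝ) → ℝ) (x : Fin 3 → ℝ) :
    Fin 3 × Fin 3 → ℝ :=
  fun ab => B ab.1 ab.2 x

/-- The first-order jet (all first partial derivatives) of the fields `B` at `x`. -/
noncomputable def jetw (B : Fin 3 → Fin 3 → (Fin 3 → ℝ) → ℝ) (x : Fin 3 → ℝ) :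
    Fin 3 × (Fin 3 × Fin 3) → ℝ :=
  fun cab => pd cab.1 (B cab.2.1 cab.2.2) x

/-- `∂𝓛/∂B_{ab}` evaluated on the jet of `B` at `x`. -/
noncomputable def dLdu (p q r : Fin 3) (B : Fin 3 → Fin 3 → (Fin 3 → ℝ) → ℝ)
    (a b : Fin 3) (x : Fin 3 → ℝ) : ℝ :=
  deriv (fun t => Ldens p q r (Function.update (jetu B x) (a, b) t) (jetw B x)) (B a b x)

/-- `∂𝓛/∂(∂_c B_{ab})` evaluated on the jet of `B` at `x`. -/
noncomputable def dLdw (p q r : Fin 3) (B : Fin 3 → Fin 3 → (Fin 3 → ℝ) → ℝ)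
    (c a b : Fin 3) (x : Fin 3 → ℝ) : ℝ :=
  deriv (fun t => Ldens p q r (jetu B x) (Function.update (jetw B x) (c, (a, b)) t))
    (pd c (B a b) x)

/-- The first-order Euler–Lagrange expression
`δ𝓛/δB_{ab} = ∂𝓛/∂B_{ab} − Σ_c ∂_c (∂𝓛/∂(∂_c B_{ab}))`. -/
noncomputable def EL (p q r : Fin 3) (B : Fin 3 → Fin 3 → (Fin 3 → ℝ) → ℝ)
    (a b : Fin 3) (x : Fin 3 → ℝ) : ℝ :=
  dLdu p q r B a b x - ∑ c : Fin 3, pd c (dLdw p q r B c a b) x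


section Aux

private lemma deriv_affine {f : ℝ → ℝ} {A : ℝ} (h : ∀ t, f t = A * t + f 0) (t0 : ℝ) :
    deriv f t0 = A := by
  have hf : deriv f t0 = deriv (fun t => A * t + f 0) t0 := by
    congr 1; funext t; exact h t
  rw [hf]
  have : HasDerivAt (fun t => A * t + f 0) A t0 := by
    simpa using ((hasDerivAt_id t0).const_mul A).add_const (f 0)
  exact this.deriv

private lemma mem3 {p q r : Fin 3} (hpq : p ≠ q) (hpr : p ≠ r) (hqr : q ≠ r) (x : Fin 3) :
    x = p ∨ x = q ∨ x = r := by
  have h1 := p.isLt; have h2 := q.isLt; have h3 := r.isLt; have h4 := x.isLt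
  simp only [Ne, Fin.ext_iff] at hpq hpr hqr ⊢
  omega

private lemma sum3 {p q r : Fin 3} (hpq : p ≠ q) (hpr : p ≠ r) (hqr : q ≠ r)
    (f : Fin 3 → ℝ) : ∑ c, f c = f p + f q + f r := by
  have huniv : (Finset.univ : Finset (Fin 3)) = {p, q, r} := by
    symm; rw [Finset.eq_univ_iff_forall]; intro x
    simpa using mem3 hpq hpr hqr x
  rw [huniv, Finset.sum_insert (by simp [hpq, hpr]),
    Finset.sum_insert (by simp [hqr]), Finset.sum_singleton]
  ring

end Aux

private lemma Ldens_cyclic (p q r : Fin 3) : Ldens p q r = Ldens q r p := by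
  funext u w; simp only [Ldens]; ring

private lemma EL_cyclic (p q r : Fin 3) (B : Fin 3 → Fin 3 → (Fin 3 → ℝ) → ℝ)
    (a b : Fin 3) (x : Fin 3 → ℝ) : EL p q r B a b x = EL q r p B a b x := by
  unfold EL dLdu dLdw
  rw [Ldens_cyclic p q r]

private lemma EL_pq (p q r : Fin 3) (B : Fin 3 → Fin 3 → (Fin 3 → ℝ) → ℝ)
    (hd : Differentiable ℝ (B q p)) (hpq : p ≠ q) (hpr : p ≠ r) (hqr : q ≠ r)
    (x : Fin 3 → ℝ) :
    EL p q r B p q x = -pd r (B q p) x + B q r x * B r p x := by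
  have hdu : dLdu p q r B p q x = -(1/2) * pd r (B q p) x + B r p x * B q r x := by
    unfold dLdu; apply deriv_affine; intro t
    simp [Ldens, jetu, jetw, Function.update, hpq, hpr, hqr, hpq.symm, hpr.symm, hqr.symm,
      Prod.ext_iff]
    ring
  have hwr : dLdw p q r B r p q = fun y => (1/2) * B q p y := by
    funext y; unfold dLdw; apply deriv_affine; intro t
    simp [Ldens, jetu, jetw, Function.update, hpq, hpr, hqr, hpq.symm, hpr.symm, hqr.symm,
      Prod.ext_iff]
    ring
  have hwp : dLdw p q r B p p q = fun _ => (0:ℝ) := by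
    funext y; unfold dLdw; apply deriv_affine; intro t
    simp [Ldens, jetu, jetw, Function.update, hpq, hpr, hqr, hpq.symm, hpr.symm, hqr.symm,
      Prod.ext_iff]
  have hwq : dLdw p q r B q p q = fun _ => (0:ℝ) := by
    funext y; unfold dLdw; apply deriv_affine; intro t
    simp [Ldens, jetu, jetw, Function.update, hpq, hpr, hqr, hpq.symm, hpr.symm, hqr.symm,
      Prod.ext_iff]
  have hpd0 : ∀ c : Fin 3, pd c (fun _ : Fin 3 → ℝ => (0:ℝ)) x = 0 := by
    intro c; simp [pd]
  have hpdr : pd r (fun y => (1/2) * B q p y) x = (1/2) * pd r (B q p) x := by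
    simp only [pd]; rw [fderiv_const_mul (hd x)]; simp
  unfold EL
  rw [sum3 hpq hpr hqr, hdu, hwr, hwp, hwq, hpd0, hpd0, hpdr]
  ring

private lemma EL_qp (p q r : Fin 3) (B : Fin 3 → Fin 3 → (Fin 3 → ℝ) → ℝ)
    (hd : Differentiable ℝ (B p q)) (hpq : p ≠ q) (hpr : p ≠ r) (hqr : q ≠ r)
    (x : Fin 3 → ℝ) :
    EL p q r B q p x = pd r (B p q) x - B p r x * B r q x := by
  have hdu : dLdu p q r B q p x = (1/2) * pd r (B p q) x - B r q x * B p r x := by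
    unfold dLdu; apply deriv_affine; intro t
    simp [Ldens, jetu, jetw, Function.update, hpq, hpr, hqr, hpq.symm, hpr.symm, hqr.symm,
      Prod.ext_iff]
    ring
  have hwr : dLdw p q r B r q p = fun y => -(1/2) * B p q y := by
    funext y; unfold dLdw; apply deriv_affine; intro t
    simp [Ldens, jetu, jetw, Function.update, hpq, hpr, hqr, hpq.symm, hpr.symm, hqr.symm,
      Prod.ext_iff]
    ring
  have hwp : dLdw p q r B p q p = fun _ => (0:ℝ) := by
    funext y; unfold dLdw; apply deriv_affine; intro t
    simp [Ldens, jetu, jetw, Function.update, hpq, hpr, hqr, hpq.symm, hpr.symm, hqr.symm,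
      Prod.ext_iff]
  have hwq : dLdw p q r B q q p = fun _ => (0:ℝ) := by
    funext y; unfold dLdw; apply deriv_affine; intro t
    simp [Ldens, jetu, jetw, Function.update, hpq, hpr, hqr, hpq.symm, hpr.symm, hqr.symm,
      Prod.ext_iff]
  have hpd0 : ∀ c : Fin 3, pd c (fun _ : Fin 3 → ℝ => (0:ℝ)) x = 0 := by
    intro c; simp [pd]
  have hpdr : pd r (fun y => -(1/2) * B p q y) x = -(1/2) * pd r (B p q) x := by
    simp only [pd]; rw [fderiv_const_mul (hd x)]; simp
  unfold EL
  rw [sum3 hpq hpr hqr, hdu, hwr, hwp, hwq, hpd0, hpd0, hpdr]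
  ring


/-- the conventional variational derivatives of the Darboux
Lagrangian reproduce the Darboux system. -/
theorem darboux_euler_lagrange
    (B : Fin 3 → Fin 3 → (Fin 3 → ℝ) → ℝ)
    (hsmooth : ∀ a b, a ≠ b → ContDiff ℝ (⊤ : ℕ∞) (B a b))
    (p q r : Fin 3) (hpq : p ≠ q) (hpr : p ≠ r) (hqr : q ≠ r) :
    (∀ x, EL p q r B p q x = -pd r (B q p) x + B q r x * B r p x) ∧
    ((∀ x, EL p q r B q p x = pd r (B p q) x - B p r x * B r q x) ∨
      (∀ x, EL p q r B q p x = -(pd r (B p q) x - B p r x * B r q x))) ∧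
    ((∀ a b, a ≠ b → ∀ x, EL p q r B a b x = 0) ↔
      (∀ a b c : Fin 3, a ≠ b → a ≠ c → b ≠ c →
        ∀ x, pd c (B a b) x = B a c x * B c b x)) := by
  have dqp : Differentiable ℝ (B q p) := (hsmooth q p hpq.symm).differentiable (by simp)
  have dpq : Differentiable ℝ (B p q) := (hsmooth p q hpq).differentiable (by simp)
  have drq : Differentiable ℝ (B r q) := (hsmooth r q hqr.symm).differentiable (by simp)
  have dqr : Differentiable ℝ (B q r) := (hsmooth q r hqr).differentiable (by simp)
  have dpr : Differentiable ℝ (B p r) := (hsmooth p r hpr).differentiable (by simp)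
  have drp : Differentiable ℝ (B r p) := (hsmooth r p hpr.symm).differentiable (by simp)
  have E1 : ∀ x, EL p q r B p q x = -pd r (B q p) x + B q r x * B r p x :=
    fun x => EL_pq p q r B dqp hpq hpr hqr x
  have E2 : ∀ x, EL p q r B q p x = pd r (B p q) x - B p r x * B r q x :=
    fun x => EL_qp p q r B dpq hpq hpr hqr x
  have E3 : ∀ x, EL p q r B q r x = -pd p (B r q) x + B r p x * B p q x := fun x => by
    rw [EL_cyclic p q r B q r x]
    exact EL_pq q r p B drq hqr hpq.symm hpr.symm x
  have E4 : ∀ x, EL p q r B r q x = pd p (B q r) x - B q p x * B p r x := fun x => by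
    rw [EL_cyclic p q r B r q x]
    exact EL_qp q r p B dqr hqr hpq.symm hpr.symm x
  have E5 : ∀ x, EL p q r B r p x = -pd q (B p r) x + B p q x * B q r x := fun x => by
    rw [EL_cyclic p q r B r p x, EL_cyclic q r p B r p x]
    exact EL_pq r p q B dpr hpr.symm hqr.symm hpq x
  have E6 : ∀ x, EL p q r B p r x = pd q (B r p) x - B r q x * B q p x := fun x => by
    rw [EL_cyclic p q r B p r x, EL_cyclic q r p B p r x]
    exact EL_qp r p q B drp hpr.symm hqr.symm hpq x
  refine ⟨E1, Or.inl E2, ?_⟩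
  constructor
  · intro h a b c hab hac hbc x
    have D1 : ∀ y, pd r (B q p) y = B q r y * B r p y := fun y => by
      have hz := h p q hpq y; rw [E1 y] at hz; linarith
    have D2 : ∀ y, pd r (B p q) y = B p r y * B r q y := fun y => by
      have hz := h q p hpq.symm y; rw [E2 y] at hz; linarith
    have D3 : ∀ y, pd p (B r q) y = B r p y * B p q y := fun y => by
      have hz := h q r hqr y; rw [E3 y] at hz; linarith
    have D4 : ∀ y, pd p (B q r) y = B q p y * B p r y := fun y => by
      have hz := h r q hqr.symm y; rw [E4 y] at hz; linarith
    have D5 : ∀ y, pd q (B p r) y = B p q y * B q r y := fun y => by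
      have hz := h r p hpr.symm y; rw [E5 y] at hz; linarith
    have D6 : ∀ y, pd q (B r p) y = B r q y * B q p y := fun y => by
      have hz := h p r hpr y; rw [E6 y] at hz; linarith
    rcases mem3 hpq hpr hqr a with rfl | rfl | rfl <;>
      rcases mem3 hpq hpr hqr b with rfl | rfl | rfl <;>
      rcases mem3 hpq hpr hqr c with rfl | rfl | rfl <;>
      first
        | exact absurd rfl hab
        | exact absurd rfl hac
        | exact absurd rfl hbc
        | exact D1 x
        | exact D2 x
        | exact D3 x
        | exact D4 x
        | exact D5 x
        | exact D6 x
  · intro h a b hab x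
    have D1 := h q p r hpq.symm hqr hpr
    have D2 := h p q r hpq hpr hqr
    have D3 := h r q p hqr.symm hpr.symm hpq.symm
    have D4 := h q r p hqr hpq.symm hpr.symm
    have D5 := h p r q hpr hpq hqr.symm
    have D6 := h r p q hpr.symm hqr.symm hpq
    rcases mem3 hpq hpr hqr a with rfl | rfl | rfl <;>
      rcases mem3 hpq hpr hqr b with rfl | rfl | rfl <;>
      first
        | exact absurd rfl hab
        | (rw [E1 x, D1 x]; ring)
        | (rw [E2 x, D2 x]; ring)
        | (rw [E3 x, D3 x]; ring)
        | (rw [E4 x, D4 x]; ring)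
        | (rw [E5 x, D5 x]; ring)
        | (rw [E6 x, D6 x]; ring)
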